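/- Let A be a unital C*-algebra, X ∈ A self-adjoint, and z ∈ A with im(z) ≥ ε·1 for some ε > 0. Then im((z - X)⁻¹) = -(z - X)⁻¹ im(z) ((z - X)⁻¹)* ≤ -ε ‖z - X‖⁻² · 1. -/

import Mathlib

/-- The "imaginary part" `(z - z*)/(2i)` of an element of a complex star algebra. -/
noncomputable def imPart {A : Type*} [NormedRing A] [NormedAlgebra ℂ A] [StarRing A] (z : A) : A :=
  (2 * Complex.I)⁻¹ • (z - star z)

private lemma aux_smul_nonneg {A : Type*} [NormedRing A] [StarRing A]
    [NormedAlgebra ℂ A] [StarModule ℂ A] [PartialOrder A] [StarOrderedRing A]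
    {r : ℝ} (hr : 0 ≤ r) {a : A} (ha : 0 ≤ a) : 0 ≤ (r : ℂ) • a := by
  have h2 := star_left_conjugate_nonneg ha (((Real.sqrt r : ℝ) : ℂ) • 1)
  have hs : star ((((Real.sqrt r : ℝ)) : ℂ) • (1 : A)) = (((Real.sqrt r : ℝ)) : ℂ) • 1 := by
    simp [star_smul, Complex.conj_ofReal]
  rw [hs] at h2
  simpa [smul_mul_assoc, mul_smul_comm, smul_smul, ← Complex.ofReal_mul,
    Real.mul_self_sqrt hr] using h2

/-- If `X` is self-adjoint and `im z ≥ ε·1` with `ε > 0`, then `z - X` is invertible with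
inverse `w`, and `im w = - w (im z) w* ≤ -ε ‖z - X‖⁻² · 1`. -/
theorem stmt2 {A : Type*} [NormedRing A] [StarRing A] [CStarRing A]
    [NormedAlgebra ℂ A] [CompleteSpace A] [StarModule ℂ A]
    [PartialOrder A] [StarOrderedRing A]
    (X : A) (hX : star X = X)
    (z : A) (ε : ℝ) (hε : 0 < ε)
    (h : (ε : ℂ) • (1 : A) ≤ imPart z) :
    ∃ w : A, (z - X) * w = 1 ∧ w * (z - X) = 1 ∧
      imPart w = -(w * imPart z * star w) ∧
      imPart w ≤ ((-(ε / ‖z - X‖ ^ 2) : ℝ) : ℂ) • (1 : A) := by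
  rcases subsingleton_or_nontrivial A with hA | hA
  · exact ⟨1, Subsingleton.elim _ _, Subsingleton.elim _ _, Subsingleton.elim _ _,
      le_of_eq (Subsingleton.elim _ _)⟩
  letI : CStarAlgebra A :=
    { ‹NormedRing A›, ‹StarRing A›, ‹CStarRing A›, ‹NormedAlgebra ℂ A›, ‹CompleteSpace A›,
      ‹StarModule ℂ A› with }
  set y := z - X with hy
  have hysub : y - star y = z - star z := by
    rw [hy, star_sub, hX]; abel
  have him : imPart y = imPart z := by rw [imPart, imPart, hysub]
  set e : A := (-Complex.I) • y - (ε : ℂ) • 1 with he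
  have h' : (0 : A) ≤ imPart z - (ε : ℂ) • 1 := sub_nonneg.mpr h
  have id1 : star e * e + ((2 * ε : ℝ) : ℂ) • (imPart z - (ε : ℂ) • 1)
      = star y * y - ((ε ^ 2 : ℝ) : ℂ) • 1 := by
    rw [← him, he, imPart]
    simp only [star_sub, star_smul, star_one, RCLike.star_def, map_neg, Complex.conj_I,
      Complex.conj_ofReal, neg_neg, sub_mul, mul_sub, smul_mul_assoc, mul_smul_comm,
      smul_smul, smul_sub, one_mul, mul_one]
    match_scalars <;> simp [Complex.ext_iff, pow_two] <;> ring
  have id2 : e * star e + ((2 * ε : ℝ) : ℂ) • (imPart z - (ε : ℂ) • 1)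
      = y * star y - ((ε ^ 2 : ℝ) : ℂ) • 1 := by
    rw [← him, he, imPart]
    simp only [star_sub, star_smul, star_one, RCLike.star_def, map_neg, Complex.conj_I,
      Complex.conj_ofReal, neg_neg, sub_mul, mul_sub, smul_mul_assoc, mul_smul_comm,
      smul_smul, smul_sub, one_mul, mul_one]
    match_scalars <;> simp [Complex.ext_iff, pow_two] <;> ring
  have hsq_nn : (0 : A) ≤ ((ε ^ 2 : ℝ) : ℂ) • 1 := aux_smul_nonneg (by positivity) zero_le_one
  have hsq_unit : IsUnit (((ε ^ 2 : ℝ) : ℂ) • (1 : A)) := by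
    rw [← Algebra.algebraMap_eq_smul_one]
    exact (isUnit_iff_ne_zero.mpr (by exact_mod_cast (by positivity : (ε ^ 2 : ℝ) ≠ 0))).map
      (algebraMap ℂ A)
  have key1 : ((ε ^ 2 : ℝ) : ℂ) • (1 : A) ≤ star y * y := by
    have h0 := add_nonneg (star_mul_self_nonneg e)
      (aux_smul_nonneg (by positivity : (0:ℝ) ≤ 2 * ε) h')
    rw [id1] at h0
    exact sub_nonneg.mp h0
  have key2 : ((ε ^ 2 : ℝ) : ℂ) • (1 : A) ≤ y * star y := by
    have h0 := add_nonneg (mul_star_self_nonneg e)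
      (aux_smul_nonneg (by positivity : (0:ℝ) ≤ 2 * ε) h')
    rw [id2] at h0
    exact sub_nonneg.mp h0
  obtain ⟨u1, hu1⟩ := CStarAlgebra.isUnit_of_le _ key1 (IsStrictlyPositive.iff_of_unital.mpr ⟨hsq_nn, hsq_unit⟩)
  obtain ⟨u2, hu2⟩ := CStarAlgebra.isUnit_of_le _ key2 (IsStrictlyPositive.iff_of_unital.mpr ⟨hsq_nn, hsq_unit⟩)
  obtain ⟨w, hwy, hyw⟩ : ∃ w : A, w * y = 1 ∧ y * w = 1 := by
    have hleft : (↑u1⁻¹ * star y) * y = 1 := by rw [mul_assoc, ← hu1, Units.inv_mul]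
    have hright : y * (star y * ↑u2⁻¹) = 1 := by rw [← mul_assoc, ← hu2, Units.mul_inv]
    have hlr : (↑u1⁻¹ * star y : A) = star y * ↑u2⁻¹ := by
      calc (↑u1⁻¹ * star y : A) = (↑u1⁻¹ * star y) * (y * (star y * ↑u2⁻¹)) := by
            rw [hright, mul_one]
        _ = ((↑u1⁻¹ * star y) * y) * (star y * ↑u2⁻¹) := by simp [mul_assoc]
        _ = star y * ↑u2⁻¹ := by rw [hleft, one_mul]
    exact ⟨↑u1⁻¹ * star y, hleft, by rw [hlr]; exact hright⟩
  have hstar : star y * star w = 1 := by rw [← star_mul, hwy, star_one]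
  have hstar' : star w * star y = 1 := by rw [← star_mul, hyw, star_one]
  -- the imaginary part formula
  have him_w : imPart w = -(w * imPart z * star w) := by
    have h5 : w * (y - star y) * star w = star w - w := by
      rw [mul_sub, sub_mul, hwy, one_mul, mul_assoc, hstar, mul_one]
    rw [imPart, imPart, ← hysub, mul_smul_comm, smul_mul_assoc, h5, ← smul_neg, neg_sub]
  refine ⟨w, hyw, hwy, him_w, ?_⟩
  -- the inequality
  have hy0 : y ≠ 0 := by
    rintro h0
    rw [h0, mul_zero] at hwy
    exact zero_ne_one hwy
  have hN : (‖y‖ ^ 2 : ℝ) ≠ 0 := by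
    have : ‖y‖ ≠ 0 := fun hc => hy0 (norm_eq_zero.mp hc)
    positivity
  set Y : Aˣ := ⟨y, w, hyw, hwy⟩ with hY
  set Ys : Aˣ := ⟨star y, star w, hstar, hstar'⟩ with hYs
  set B : Aˣ := ⟨algebraMap ℝ A (‖y‖ ^ 2), algebraMap ℝ A (‖y‖ ^ 2)⁻¹,
    by rw [← map_mul, mul_inv_cancel₀ hN, map_one],
    by rw [← map_mul, inv_mul_cancel₀ hN, map_one]⟩ with hB
  have hUB : ((Ys * Y : Aˣ) : A) ≤ ((B : Aˣ) : A) := by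
    show star y * y ≤ algebraMap ℝ A (‖y‖ ^ 2)
    have h6 := IsSelfAdjoint.le_algebraMap_norm_self (a := star y * y)
      (IsSelfAdjoint.star_mul_self y)
    rwa [CStarRing.norm_star_mul_self, ← pow_two] at h6
  have hinv := CStarAlgebra.inv_le_inv (a := Ys * Y) (b := B)
    (star_mul_self_nonneg y) hUB
  have hUinv : ((( Ys * Y : Aˣ)⁻¹ : Aˣ) : A) = w * star w := by
    rw [mul_inv_rev]; rfl
  have hBinv : (((B)⁻¹ : Aˣ) : A) = algebraMap ℝ A ((‖y‖ ^ 2)⁻¹) := rfl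
  rw [hUinv, hBinv] at hinv
  -- now chain
  have step1 : w * ((ε : ℂ) • 1) * star w ≤ w * imPart z * star w :=
    star_right_conjugate_le_conjugate h w
  have e1 : w * ((ε : ℂ) • 1) * star w = (ε : ℂ) • (w * star w) := by
    simp [mul_smul_comm, smul_mul_assoc]
  have step2 : ((ε * (‖y‖ ^ 2)⁻¹ : ℝ) : ℂ) • (1 : A) ≤ (ε : ℂ) • (w * star w) := by
    have h7 : (0 : A) ≤ (ε : ℂ) • (w * star w - algebraMap ℝ A ((‖y‖ ^ 2)⁻¹)) :=
      aux_smul_nonneg hε.le (sub_nonneg.mpr hinv)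
    rw [smul_sub] at h7
    have h8 : (ε : ℂ) • (algebraMap ℝ A ((‖y‖ ^ 2)⁻¹) : A)
        = ((ε * (‖y‖ ^ 2)⁻¹ : ℝ) : ℂ) • (1 : A) := by
      rw [Algebra.algebraMap_eq_smul_one, ← Complex.coe_smul, smul_smul,
        ← Complex.ofReal_mul]
    rw [h8] at h7
    exact sub_nonneg.mp h7
  calc imPart w = -(w * imPart z * star w) := him_w
    _ ≤ -(w * ((ε : ℂ) • 1) * star w) := neg_le_neg step1
    _ = -((ε : ℂ) • (w * star w)) := by rw [e1]
    _ ≤ -(((ε * (‖y‖ ^ 2)⁻¹ : ℝ) : ℂ) • (1 : A)) := neg_le_neg step2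
    _ = ((-(ε / ‖y‖ ^ 2) : ℝ) : ℂ) • (1 : A) := by
        rw [div_eq_mul_inv, Complex.ofReal_neg, neg_smul]
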